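/- There exist a unit vector Ψ ∈ ℂ² ⊗ ℂ² ⊗ ℂ² and, for each x ∈ {0,1}, projective POVMs {A_a^x}_{a∈{0,1,⊥}} on the middle ℂ² factor and {B_a^x}_{a∈{0,1,⊥}} on the last ℂ² factor, such that with V_a^x := H^x|a⟩⟨a|H^x (H the Hadamard matrix) one has: (i) P_Correct := (1/2)·Σ_{x∈{0,1}} Σ_{a∈{0,1}} ⟨V_a^x·A_a^x·B_a^x⟩_Ψ = 1/2; (ii) P_Wrong := (1/2)·Σ_{x∈{0,1}} Σ_{a∈{0,1}} ⟨V_a^x·A_{1−a}^x·B_{1−a}^x⟩_Ψ = 0; (iii) P_NoPhoton := (1/2)·Σ_{x∈{0,1}} ⟨I·A_⊥^x·B_⊥^x⟩_Ψ = 1/2; (iv) P_Abort := (1/2)·Σ_{x∈{0,1}} Σ_{a≠b∈{0,1,⊥}} ⟨I·A_a^x·B_b^x⟩_Ψ = 0. (One valid choice is Ψ = (1/√2)(|0⟩|0⟩|0⟩ + |+⟩|1⟩|1⟩), A_0^x = B_0^x = |x⟩⟨x|, A_1^x = B_1^x = 0, A_⊥^x = B_⊥^x = |1−x⟩⟨1−x|.)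 This exhibits the uniform strategy breaking the lossy BB84 quantum position verification protocol at transmission rate η = 1/2 with zero error. -/

import Mathlib

open Matrix Kronecker BigOperators

noncomputable section

/-- ⟨Ψ, (V ⊗ A ⊗ B) Ψ⟩ as a real number. -/
def exval (χ : Fin 2 × Fin 2 × Fin 2 → ℂ)
    (V A B : Matrix (Fin 2) (Fin 2) ℂ) : ℝ :=
  (star χ ⬝ᵥ (V ⊗ₖ (A ⊗ₖ B)).mulVec χ).re

/-- A projective POVM with outcomes {0, 1, ⊥} (⊥ encoded as the index 2): three
orthogonal projections (possibly zero) summing to the identity. -/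
def IsProjPOVM (A : Fin 3 → Matrix (Fin 2) (Fin 2) ℂ) : Prop :=
  (∀ a, (A a)ᴴ = A a ∧ A a * A a = A a) ∧ A 0 + A 1 + A 2 = 1

/-- The Hadamard matrix. -/
def Hmat : Matrix (Fin 2) (Fin 2) ℂ :=
  (((Real.sqrt 2)⁻¹ : ℝ) : ℂ) • !![1, 1; 1, -1]

/-- The BB84 verifier measurement operators V_a^x = H^x |a⟩⟨a| H^x. -/
def Vbb84 (x a : Fin 2) : Matrix (Fin 2) (Fin 2) ℂ :=
  Hmat ^ (x : ℕ) * Matrix.single a a 1 * Hmat ^ (x : ℕ)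

/-! The attackers share `Ψ = (|0⟩|00⟩ + |+⟩|11⟩)/√2 = 2^{-1/2} ∑ₖ H^k|0⟩ ⊗ |k⟩ ⊗ |k⟩` and,
on basis `x`, both measure their qubit in the computational basis, answering `0` on `|x⟩` and
`⊥` on `|1 - x⟩`. Their outcomes always coincide, so they never abort. On outcome `x` the
verifier's qubit is `H^x|0⟩`, and since `H` is a self-adjoint involution,
`⟨H^x b| V_a^x |H^x b⟩ = δ_ab`: the answer `0` is then always correct. Each of the two branches
has weight `1/2`. -/

lemma star_mulVec_dotProduct_mulVec_mulVec {n R : Type*} [Fintype n] [Semiring R] [StarRing R]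
    (U M : Matrix n n R) (v : n → R) :
    star (U *ᵥ v) ⬝ᵥ M *ᵥ U *ᵥ v = star v ⬝ᵥ (Uᴴ * M * U) *ᵥ v := by
  simp only [star_mulVec, dotProduct_mulVec, vecMul_vecMul, mulVec_mulVec, Matrix.mul_assoc]

lemma isHermitian_single_one {n R : Type*} [DecidableEq n] [Semiring R] [StarRing R] (i : n) :
    (single i i (1 : R)).IsHermitian := by
  simp [IsHermitian, conjTranspose_single]

lemma isIdempotentElem_single_one {n R : Type*} [Fintype n] [DecidableEq n] [Semiring R] (i : n) :
    IsIdempotentElem (single i i (1 : R)) := by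
  simp [IsIdempotentElem, single_mul_single_same]

lemma single_add_single_one_sub (x : Fin 2) :
    single x x (1 : ℂ) + single (1 - x) (1 - x) 1 = 1 := by
  ext i j
  fin_cases x <;> fin_cases i <;> fin_cases j <;> simp [one_apply]

lemma isProjPOVM_of_add_eq_one {P Q : Matrix (Fin 2) (Fin 2) ℂ} (hP : P.IsHermitian)
    (hP' : IsIdempotentElem P) (hQ : Q.IsHermitian) (hQ' : IsIdempotentElem Q) (h : P + Q = 1) :
    IsProjPOVM ![P, 0, Q] := by
  refine ⟨fun a => ?_, by simpa using h⟩
  fin_cases a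
  exacts [⟨hP, hP'⟩, by simp, ⟨hQ, hQ'⟩]

lemma exval_smul (c : ℂ) (χ : Fin 2 × Fin 2 × Fin 2 → ℂ)
    (V A B : Matrix (Fin 2) (Fin 2) ℂ) :
    exval (c • χ) V A B = ‖c‖ ^ 2 * exval χ V A B := by
  rw [exval, exval, star_smul, mulVec_smul, smul_dotProduct, dotProduct_smul, smul_smul,
    smul_eq_mul, RCLike.star_def, Complex.conj_mul', ← Complex.ofReal_pow, Complex.re_ofReal_mul]

lemma exval_zero_middle (χ : Fin 2 × Fin 2 × Fin 2 → ℂ) (V B : Matrix (Fin 2) (Fin 2) ℂ) :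
    exval χ V 0 B = 0 := by
  simp [exval]

lemma exval_zero_right (χ : Fin 2 × Fin 2 × Fin 2 → ℂ) (V A : Matrix (Fin 2) (Fin 2) ℂ) :
    exval χ V A 0 = 0 := by
  simp [exval]

/-- The state `∑ₖ φ k ⊗ |k⟩ ⊗ |k⟩`. -/
def correlatedState (φ : Fin 2 → Fin 2 → ℂ) : Fin 2 × Fin 2 × Fin 2 → ℂ :=
  fun p => if p.2.1 = p.2.2 then φ p.2.1 p.1 else 0

lemma sum_norm_sq_correlatedState (φ : Fin 2 → Fin 2 → ℂ) :
    ∑ p, ‖correlatedState φ p‖ ^ 2 = ∑ k, (star (φ k) ⬝ᵥ φ k).re := by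
  simp [correlatedState, dotProduct, Fintype.sum_prod_type, Fin.sum_univ_two, Complex.conj_mul',
    ← Complex.ofReal_pow]
  ring

lemma exval_correlatedState_single (φ : Fin 2 → Fin 2 → ℂ) (V : Matrix (Fin 2) (Fin 2) ℂ)
    (i j : Fin 2) :
    exval (correlatedState φ) V (single i i 1) (single j j 1) =
      if i = j then (star (φ i) ⬝ᵥ V *ᵥ φ i).re else 0 := by
  fin_cases i <;> fin_cases j <;>
    simp [exval, correlatedState, dotProduct, mulVec, Fintype.sum_prod_type, Fin.sum_univ_two,
      kroneckerMap_apply, single_apply]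

lemma conjTranspose_Hmat : Hmatᴴ = Hmat := by
  ext i j
  fin_cases i <;> fin_cases j <;> simp [Hmat]

lemma Hmat_mul_self : Hmat * Hmat = 1 := by
  have h : (Real.sqrt 2 : ℂ)⁻¹ * (Real.sqrt 2 : ℂ)⁻¹ = 1 / 2 := by
    rw [← mul_inv, ← Complex.ofReal_mul, Real.mul_self_sqrt zero_le_two]; simp
  ext i j
  fin_cases i <;> fin_cases j <;> simp [Hmat, Matrix.mul_apply, Fin.sum_univ_two, h] <;> norm_num

lemma conjTranspose_Hmat_pow (n : ℕ) : (Hmat ^ n)ᴴ = Hmat ^ n := by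
  rw [conjTranspose_pow, conjTranspose_Hmat]

lemma Hmat_pow_mul_self (n : ℕ) : Hmat ^ n * Hmat ^ n = 1 := by
  rw [← (Commute.refl Hmat).mul_pow, Hmat_mul_self, one_pow]

def bb84State (x a : Fin 2) : Fin 2 → ℂ := Hmat ^ (x : ℕ) *ᵥ Pi.single a 1

lemma star_bb84State_dotProduct_self (x a : Fin 2) :
    star (bb84State x a) ⬝ᵥ bb84State x a = 1 := by
  have h := star_mulVec_dotProduct_mulVec_mulVec (Hmat ^ (x : ℕ)) 1 (Pi.single a 1)
  rw [one_mulVec, Matrix.mul_one, conjTranspose_Hmat_pow, Hmat_pow_mul_self, one_mulVec] at h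
  rw [bb84State, h]
  simp

lemma star_bb84State_dotProduct_Vbb84_mulVec (x a b : Fin 2) :
    star (bb84State x b) ⬝ᵥ Vbb84 x a *ᵥ bb84State x b = if a = b then 1 else 0 := by
  have hU := Hmat_pow_mul_self x
  rw [bb84State, star_mulVec_dotProduct_mulVec_mulVec, Vbb84, conjTranspose_Hmat_pow]
  simp only [← Matrix.mul_assoc, hU, Matrix.one_mul]
  rw [Matrix.mul_assoc, hU, Matrix.mul_one]
  fin_cases a <;> fin_cases b <;> simp [dotProduct, single_apply]

def basisMeasurement (x : Fin 2) : Fin 3 → Matrix (Fin 2) (Fin 2) ℂ :=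
  ![single x x 1, 0, single (1 - x) (1 - x) 1]

lemma isProjPOVM_basisMeasurement (x : Fin 2) : IsProjPOVM (basisMeasurement x) :=
  isProjPOVM_of_add_eq_one (isHermitian_single_one x) (isIdempotentElem_single_one x)
    (isHermitian_single_one (1 - x)) (isIdempotentElem_single_one (1 - x))
    (single_add_single_one_sub x)

def uniformState : Fin 2 × Fin 2 × Fin 2 → ℂ :=
  (((Real.sqrt 2)⁻¹ : ℝ) : ℂ) • correlatedState (fun k => bb84State k 0)

lemma sum_norm_sq_uniformState : ∑ p, ‖uniformState p‖ ^ 2 = 1 := by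
  simp only [uniformState, Pi.smul_apply, smul_eq_mul, norm_mul, mul_pow, ← Finset.mul_sum,
    sum_norm_sq_correlatedState, star_bb84State_dotProduct_self]
  simp

lemma exval_uniformState (V : Matrix (Fin 2) (Fin 2) ℂ) (i j : Fin 2) :
    exval uniformState V (single i i 1) (single j j 1) =
      if i = j then (star (bb84State i 0) ⬝ᵥ V *ᵥ bb84State i 0).re / 2 else 0 := by
  have hc : ‖(((Real.sqrt 2)⁻¹ : ℝ) : ℂ)‖ ^ 2 = 1 / 2 := by simp
  rw [uniformState, exval_smul, hc, exval_correlatedState_single]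
  split_ifs <;> ring

lemma exval_uniformState_Vbb84 (x a : Fin 2) :
    exval uniformState (Vbb84 x a) (single x x 1) (single x x 1) = if a = 0 then 1 / 2 else 0 := by
  rw [exval_uniformState, if_pos rfl, star_bb84State_dotProduct_Vbb84_mulVec]
  split_ifs <;> norm_num

lemma exval_uniformState_one (i j : Fin 2) :
    exval uniformState 1 (single i i 1) (single j j 1) = if i = j then 1 / 2 else 0 := by
  rw [exval_uniformState, one_mulVec, star_bb84State_dotProduct_self]
  norm_num

/-- The uniform strategy breaking lossy BB84-QPV at transmission rate η = 1/2 with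
zero error: there is a state and projective POVMs with
P_Correct = 1/2, P_Wrong = 0, P_NoPhoton = 1/2 and P_Abort = 0. -/
theorem uniform_strategy_exists :
    ∃ Ψ : Fin 2 × Fin 2 × Fin 2 → ℂ, (∑ i, ‖Ψ i‖ ^ 2 = 1) ∧
      ∃ A B : Fin 2 → Fin 3 → Matrix (Fin 2) (Fin 2) ℂ,
        (∀ x, IsProjPOVM (A x)) ∧ (∀ x, IsProjPOVM (B x)) ∧
        ((1 / 2) * ∑ x : Fin 2, ∑ a : Fin 2,
            exval Ψ (Vbb84 x a) (A x a.castSucc) (B x a.castSucc) = 1 / 2) ∧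
        ((1 / 2) * ∑ x : Fin 2, ∑ a : Fin 2,
            exval Ψ (Vbb84 x a) (A x (1 - a).castSucc) (B x (1 - a).castSucc) = 0) ∧
        ((1 / 2) * ∑ x : Fin 2, exval Ψ 1 (A x 2) (B x 2) = 1 / 2) ∧
        ((1 / 2) * ∑ x : Fin 2, ∑ a : Fin 3, ∑ b : Fin 3,
            (if a = b then 0 else exval Ψ 1 (A x a) (B x b)) = 0) := by
  refine ⟨uniformState, sum_norm_sq_uniformState, basisMeasurement, basisMeasurement,
    isProjPOVM_basisMeasurement, isProjPOVM_basisMeasurement, ?_, ?_, ?_, ?_⟩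
  all_goals simp [Fin.sum_univ_two, Fin.sum_univ_three, basisMeasurement, exval_uniformState_Vbb84,
    exval_uniformState_one, exval_zero_middle, exval_zero_right]

end
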